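/- For every smooth map g : E → Aˣ, the 3-form g*η is closed: d(g*η) = 0. -/

import Mathlib

/-!
STATEMENT 3: For every smooth map `g : E → Aˣ`, the 3-form `g*η` is closed: `d(g*η) = 0`.
-/

/-- A smooth map `E → Aˣ`, encoded as a smooth `A`-valued map with invertible values. -/
def SmoothUnitMap {E : Type*} [NormedAddCommGroup E] [NormedSpace ℝ E]
    {A : Type*} [NormedRing A] [NormedAlgebra ℝ A] (g : E → A) : Prop :=
  ContDiff ℝ (⊤ : ℕ∞) g ∧ ∀ x, IsUnit (g x)

/-- `α_g(x)v = g(x)⁻¹ * (D_v g)(x)`. -/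
noncomputable def alphaD {E : Type*} [NormedAddCommGroup E] [NormedSpace ℝ E]
    {A : Type*} [NormedRing A] [NormedAlgebra ℝ A] (g : E → A) (x v : E) : A :=
  Ring.inverse (g x) * (fderiv ℝ g x v)

/-- The pullback `g*η` of the Cartan 3-form:
`(g*η)(x)(u,v,w) = ⟨[α_g(x)u, α_g(x)v], α_g(x)w⟩`. -/
noncomputable def pullEta {E : Type*} [NormedAddCommGroup E] [NormedSpace ℝ E]
    {A : Type*} [NormedRing A] [NormedAlgebra ℝ A]
    (B : A →ₗ[ℝ] A →ₗ[ℝ] ℝ) (g : E → A) (x u v w : E) : ℝ :=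
  B (alphaD g x u * alphaD g x v - alphaD g x v * alphaD g x u) (alphaD g x w)

/-- The exterior derivative of a 3-form `ω` (given by its values `ω x v₀ v₁ v₂`):
`dω(x)(v₀,…,v₃) = Σᵢ (−1)ⁱ D_{vᵢ} ω(·)(v₀,…,v̂ᵢ,…,v₃)`. -/
noncomputable def extDeriv3 {E : Type*} [NormedAddCommGroup E] [NormedSpace ℝ E]
    (ω : E → E → E → E → ℝ) (x v₀ v₁ v₂ v₃ : E) : ℝ :=
  fderiv ℝ (fun y => ω y v₁ v₂ v₃) x v₀
    - fderiv ℝ (fun y => ω y v₀ v₂ v₃) x v₁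
    + fderiv ℝ (fun y => ω y v₀ v₁ v₃) x v₂
    - fderiv ℝ (fun y => ω y v₀ v₁ v₂) x v₃

/-- A continuous bilinear form on a normed space is bounded. -/
theorem pullEta_closed.bilin_exists_bound {A : Type*} [NormedRing A] [NormedAlgebra ℝ A]
    (B : A →ₗ[ℝ] A →ₗ[ℝ] ℝ)
    (Bcont : Continuous fun p : A × A => B p.1 p.2) :
    ∃ C, ∀ x y : A, ‖B x y‖ ≤ C * ‖x‖ * ‖y‖ := by
  have h0 : Filter.Tendsto (fun p : A × A => B p.1 p.2) (nhds (0, 0)) (nhds 0) := by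
    have := Bcont.tendsto ((0, 0) : A × A)
    simpa using this
  rw [Metric.tendsto_nhds_nhds] at h0
  obtain ⟨δ, δpos, hδ⟩ := h0 1 one_pos
  refine ⟨4 / (δ * δ), fun x y => ?_⟩
  rcases eq_or_ne x 0 with rfl | hx
  · simp [div_nonneg, le_of_lt δpos, mul_nonneg]
  rcases eq_or_ne y 0 with rfl | hy
  · simp [div_nonneg, le_of_lt δpos, mul_nonneg]
  have hxn : (0:ℝ) < ‖x‖ := norm_pos_iff.mpr hx
  have hyn : (0:ℝ) < ‖y‖ := norm_pos_iff.mpr hy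
  set c : ℝ := δ / (2 * ‖x‖) with hc
  set d : ℝ := δ / (2 * ‖y‖) with hd
  have hcpos : 0 < c := div_pos δpos (by positivity)
  have hdpos : 0 < d := div_pos δpos (by positivity)
  have hdist : dist ((c • x, d • y) : A × A) (0, 0) < δ := by
    rw [Prod.dist_eq]
    have h1 : dist (c • x) (0 : A) < δ := by
      rw [dist_zero_right, norm_smul, Real.norm_eq_abs, abs_of_pos hcpos, hc]
      rw [div_mul_eq_mul_div, mul_comm]
      rw [div_lt_iff₀ (by positivity)]
      nlinarith
    have h2 : dist (d • y) (0 : A) < δ := by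
      rw [dist_zero_right, norm_smul, Real.norm_eq_abs, abs_of_pos hdpos, hd]
      rw [div_mul_eq_mul_div, mul_comm]
      rw [div_lt_iff₀ (by positivity)]
      nlinarith
    exact max_lt h1 h2
  have := hδ hdist
  rw [dist_zero_right] at this
  have hB : B (c • x) (d • y) = (c * d) * B x y := by
    simp only [map_smul, LinearMap.smul_apply, smul_eq_mul]
    ring
  rw [hB] at this
  have habs : |c * d| * ‖B x y‖ < 1 := by
    rw [← Real.norm_eq_abs, ← norm_mul] at *
    simpa using this
  have hcd : c * d = δ * δ / (4 * (‖x‖ * ‖y‖)) := by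
    rw [hc, hd]; field_simp; ring
  have h4 : (0:ℝ) < δ * δ / (4 * (‖x‖ * ‖y‖)) := by positivity
  rw [hcd, abs_of_pos h4, div_mul_eq_mul_div, div_lt_iff₀ (by positivity)] at habs
  rw [div_mul_eq_mul_div, div_mul_eq_mul_div, le_div_iff₀ (by positivity)]
  nlinarith

/-- The purely algebraic Cartan identity for a symmetric invariant bilinear form. -/
theorem pullEta_closed.key_algebra {A : Type*} [NormedRing A] [NormedAlgebra ℝ A]
    (B : A →ₗ[ℝ] A →ₗ[ℝ] ℝ)
    (Bsymm : ∀ x y : A, B x y = B y x)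
    (Binv : ∀ x y z : A, B (x * y) z = B x (y * z))
    (a0 a1 a2 a3 s01 s02 s03 s12 s13 s23 : A) :
  (B (a1*a2 - a2*a1) (-(a0*a3)+s03)
     + B (a1*(-(a0*a2)+s02) + (-(a0*a1)+s01)*a2 - (a2*(-(a0*a1)+s01) + (-(a0*a2)+s02)*a1)) a3)
  - (B (a0*a2 - a2*a0) (-(a1*a3)+s13)
     + B (a0*(-(a1*a2)+s12) + (-(a1*a0)+s01)*a2 - (a2*(-(a1*a0)+s01) + (-(a1*a2)+s12)*a0)) a3)
  + (B (a0*a1 - a1*a0) (-(a2*a3)+s23)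
     + B (a0*(-(a2*a1)+s12) + (-(a2*a0)+s02)*a1 - (a1*(-(a2*a0)+s02) + (-(a2*a1)+s12)*a0)) a3)
  - (B (a0*a1 - a1*a0) (-(a3*a2)+s23)
     + B (a0*(-(a3*a1)+s13) + (-(a3*a0)+s03)*a1 - (a1*(-(a3*a0)+s03) + (-(a3*a1)+s13)*a0)) a2)
  = 0 := by
  have rot : ∀ p q r s : A, B p (q*(r*s)) = B q (r*(s*p)) := by
    intro p q r s
    rw [Bsymm, Binv, mul_assoc]
  have rot3 : ∀ p q r : A, B p (q*r) = B q (r*p) := by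
    intro p q r
    rw [Bsymm, Binv]
  simp only [map_sub, map_add, map_neg, LinearMap.sub_apply, LinearMap.add_apply,
    LinearMap.neg_apply, sub_mul, mul_sub, add_mul, mul_add, neg_mul, mul_neg,
    mul_assoc, Binv]
  rw [rot a2 a0 a1 a3, rot a1 a2 a0 a3, rot a2 a0 a3 a1, rot a2 a1 a0 a3,
      rot a1 a0 a3 a2, rot a3 a0 a1 a2, rot a1 a3 a0 a2, rot a3 a0 a2 a1,
      rot a3 a1 a0 a2, rot a1 a0 a2 a3,
      rot3 a1 a2 s03, rot3 a2 s03 a1, rot3 a2 a1 s03, rot3 a1 s03 a2,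
      rot3 a0 a2 s13, rot3 a2 s13 a0, rot3 a2 a0 s13, rot3 a0 s13 a2]
  ring

theorem pullEta_closed
    {E : Type*} [NormedAddCommGroup E] [NormedSpace ℝ E]
    {A : Type*} [NormedRing A] [NormedAlgebra ℝ A] [CompleteSpace A]
    (B : A →ₗ[ℝ] A →ₗ[ℝ] ℝ)
    (Bcont : Continuous fun p : A × A => B p.1 p.2)
    (Bsymm : ∀ x y : A, B x y = B y x)
    (Binv : ∀ x y z : A, B (x * y) z = B x (y * z))
    (g : E → A) (hg : SmoothUnitMap g) :
    ∀ (x v₀ v₁ v₂ v₃ : E), extDeriv3 (pullEta B g) x v₀ v₁ v₂ v₃ = 0 := by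
  obtain ⟨hsm, hunit⟩ := hg
  set Bc : A →L[ℝ] A →L[ℝ] ℝ :=
    LinearMap.mkContinuousOfExistsBound₂ B (pullEta_closed.bilin_exists_bound B Bcont)
    with hBcdef
  have hBc : ∀ a b : A, Bc a b = B a b := fun a b => rfl
  intro x v₀ v₁ v₂ v₃
  obtain ⟨w, hw⟩ := hunit x
  have hg' : ∀ y, HasFDerivAt g (fderiv ℝ g y) y :=
    fun y => (hsm.differentiable (by simp) y).hasFDerivAt
  have hG'' : HasFDerivAt (fderiv ℝ g) (fderiv ℝ (fderiv ℝ g) x) x :=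
    ((hsm.fderiv_right (m := 1) (WithTop.coe_le_coe.mpr le_top)).differentiable one_ne_zero x).hasFDerivAt
  have hex : ∀ v : E, ∃ Φ : E →L[ℝ] A, HasFDerivAt (fun y => alphaD g y v) Φ x ∧
      ∀ h : E, Φ h = -(alphaD g x h * alphaD g x v)
        + Ring.inverse (g x) * (fderiv ℝ (fderiv ℝ g) x h v) := by
    intro v
    have hinv : HasFDerivAt (fun y => Ring.inverse (g y))
        ((-ContinuousLinearMap.mulLeftRight ℝ A ↑w⁻¹ ↑w⁻¹).comp (fderiv ℝ g x)) x := by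
      have h1 := hasFDerivAt_ringInverse (𝕜 := ℝ) w
      rw [hw] at h1
      exact h1.comp x (hg' x)
    have happ : HasFDerivAt (fun y => fderiv ℝ g y v)
        ((ContinuousLinearMap.apply ℝ A v).comp (fderiv ℝ (fderiv ℝ g) x)) x :=
      ((ContinuousLinearMap.apply ℝ A v).hasFDerivAt).comp x hG''
    have hmul := hinv.mul' happ
    refine ⟨_, hmul, fun h => ?_⟩
    have hu : Ring.inverse (g x) = (↑w⁻¹ : A) := by rw [← hw, Ring.inverse_unit]
    simp only [ContinuousLinearMap.add_apply, ContinuousLinearMap.smul_apply,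
      ContinuousLinearMap.smulRight_apply, ContinuousLinearMap.comp_apply,
      ContinuousLinearMap.neg_apply, ContinuousLinearMap.mulLeftRight_apply,
      ContinuousLinearMap.apply_apply, smul_eq_mul, alphaD, hu, op_smul_eq_mul, neg_smul, one_smul, smul_neg]
    noncomm_ring
  choose Φ hΦ1 hΦ2 using hex
  have main : ∀ v p q r : E, fderiv ℝ (fun y => pullEta B g y p q r) x v =
      B (alphaD g x p * alphaD g x q - alphaD g x q * alphaD g x p)
        (-(alphaD g x v * alphaD g x r) + Ring.inverse (g x) * (fderiv ℝ (fderiv ℝ g) x v r))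
      + B (alphaD g x p *
            (-(alphaD g x v * alphaD g x q) + Ring.inverse (g x) * (fderiv ℝ (fderiv ℝ g) x v q))
          + (-(alphaD g x v * alphaD g x p)
              + Ring.inverse (g x) * (fderiv ℝ (fderiv ℝ g) x v p)) * alphaD g x q
          - (alphaD g x q *
              (-(alphaD g x v * alphaD g x p)
                + Ring.inverse (g x) * (fderiv ℝ (fderiv ℝ g) x v p))
            + (-(alphaD g x v * alphaD g x q)
                + Ring.inverse (g x) * (fderiv ℝ (fderiv ℝ g) x v q)) * alphaD g x p))
          (alphaD g x r) := by
    intro v p q r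
    have hq1 : HasFDerivAt (fun y => alphaD g y p * alphaD g y q - alphaD g y q * alphaD g y p) _ x := ((hΦ1 p).mul' (hΦ1 q)).sub ((hΦ1 q).mul' (hΦ1 p))
    have hbil := Bc.isBoundedBilinearMap.hasFDerivAt
      (alphaD g x p * alphaD g x q - alphaD g x q * alphaD g x p, alphaD g x r)
    have hcomp := hbil.comp x (HasFDerivAt.prodMk hq1 (hΦ1 r))
    have hfun : HasFDerivAt (fun y => pullEta B g y p q r) _ x := hcomp
    rw [hfun.fderiv]
    simp only [ContinuousLinearMap.comp_apply, ContinuousLinearMap.prod_apply,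
      IsBoundedBilinearMap.deriv_apply, ContinuousLinearMap.sub_apply,
      ContinuousLinearMap.add_apply, ContinuousLinearMap.smul_apply,
      ContinuousLinearMap.smulRight_apply, smul_eq_mul, hΦ2, hBc, op_smul_eq_mul]
  have hsym2 : ∀ p q : E, Ring.inverse (g x) * (fderiv ℝ (fderiv ℝ g) x p q)
      = Ring.inverse (g x) * (fderiv ℝ (fderiv ℝ g) x q p) := fun p q => by
    rw [second_derivative_symmetric hg' hG'' p q]
  simp only [extDeriv3]
  rw [main v₀ v₁ v₂ v₃, main v₁ v₀ v₂ v₃, main v₂ v₀ v₁ v₃, main v₃ v₀ v₁ v₂,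
      hsym2 v₁ v₀, hsym2 v₂ v₀, hsym2 v₂ v₁, hsym2 v₃ v₀, hsym2 v₃ v₁, hsym2 v₃ v₂]
  exact pullEta_closed.key_algebra B Bsymm Binv
    (alphaD g x v₀) (alphaD g x v₁) (alphaD g x v₂) (alphaD g x v₃)
    (Ring.inverse (g x) * (fderiv ℝ (fderiv ℝ g) x v₀ v₁))
    (Ring.inverse (g x) * (fderiv ℝ (fderiv ℝ g) x v₀ v₂))
    (Ring.inverse (g x) * (fderiv ℝ (fderiv ℝ g) x v₀ v₃))
    (Ring.inverse (g x) * (fderiv ℝ (fderiv ℝ g) x v₁ v₂))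
    (Ring.inverse (g x) * (fderiv ℝ (fderiv ℝ g) x v₁ v₃))
    (Ring.inverse (g x) * (fderiv ℝ (fderiv ℝ g) x v₂ v₃))
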